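/- Principal specialization of the sl_r denominator: (q^r;q^r)_∞^{r−1} · ∏_{1≤i<j≤r} (q^{j−i};q^r)_∞ (q^{r−j+i};q^r)_∞ = (q;q)_∞^r / (q^r;q^r)_∞, as formal power series in q. -/

import Mathlib

/-!
Principal specialization of the `sl_r` denominator identity:
`(q^r;q^r)_∞^{r−1} · ∏_{1≤i<j≤r} (q^{j−i};q^r)_∞ (q^{r−j+i};q^r)_∞ = (q;q)_∞^r / (q^r;q^r)_∞`,
as formal power series in `q`.  Pairs `1 ≤ i < j ≤ r` are encoded as pairs of
`Fin r` (0-indexed), so `j − i = p.2.val − p.1.val`.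
-/

noncomputable instance : TopologicalSpace (PowerSeries ℚ) :=
  TopologicalSpace.induced (fun f (n : ℕ) => (PowerSeries.coeff (R := ℚ) n) f) inferInstance

noncomputable def q : PowerSeries ℚ := PowerSeries.X

/-!
Grouping the exponents of `(q;q)_∞` by their residue mod `r` writes it as `F₁ ⋯ F_r` with
`F_d = (q^d; q^r)_∞`. Read modulo `r`, the factor `F_{j-i} F_{r-(j-i)}` of a pair `i < j` is the
product of the factors `F_{j-i}` and `F_{i-j}` of the ordered pairs `(i, j)` and `(j, i)`, so
the product over `i < j` is a product over all ordered pairs `i ≠ j`. For each `i`, `j ↦ j - i`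
runs once through the nonzero residues, so this product is `(F₁ ⋯ F_{r-1})^r`, which is
`(q;q)_∞^r / (q^r;q^r)_∞^r` because `F_r = (q^r;q^r)_∞` is invertible.
-/

open PowerSeries Filter Topology Finset

theorem piTopology_eq_induced_coeff :
    WithPiTopology.instTopologicalSpace ℚ =
      TopologicalSpace.induced (fun f (n : ℕ) => coeff n f) inferInstance :=
  ((Homeomorph.piCongrLeft (Y := fun _ => ℚ) (Finsupp.uniqueEquiv ()).symm).symm.induced_eq).symm

instance : IsTopologicalRing (PowerSeries ℚ) := by
  have h := WithPiTopology.instIsTopologicalRing ℚ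
  rwa [piTopology_eq_induced_coeff] at h

theorem isEmbedding_coeff : IsEmbedding fun f : PowerSeries ℚ => fun n : ℕ => coeff n f :=
  ⟨⟨rfl⟩, fun _ _ h => ext fun n => congrFun h n⟩

instance : T3Space (PowerSeries ℚ) := isEmbedding_coeff.t3Space

theorem continuous_constantCoeff_rat : Continuous (constantCoeff (R := ℚ)) := by
  rw [← coeff_zero_eq_constantCoeff]
  exact (continuous_apply 0).comp isEmbedding_coeff.continuous

theorem multipliable_one_sub_q_pow {ι : Type*} [LinearOrder ι] [LocallyFiniteOrderBot ι]
    {a : ι → ℕ} (ha : Tendsto a atTop atTop) : Multipliable fun i => 1 - q ^ a i := by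
  have h := WithPiTopology.multipliable_one_add_of_tendsto_order_atTop_nhds_top ℚ
    (f := fun i => -q ^ a i) <| by
      simp only [order_neg, q, order_X_pow]
      exact ENat.tendsto_nhds_top_iff_natCast_lt.2 fun n =>
        (ha.eventually_gt_atTop n).mono fun i hi => by exact_mod_cast hi
  rw [piTopology_eq_induced_coeff] at h
  simpa only [sub_eq_add_neg] using h

/-- `(q^a; q^k)_∞`. -/
noncomputable def qPochhammer (a k : ℕ) : PowerSeries ℚ := ∏' m : ℕ, (1 - q ^ (a + k * m))

theorem multipliable_qPochhammer (a : ℕ) {k : ℕ} (hk : 0 < k) :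
    Multipliable fun m : ℕ => 1 - q ^ (a + k * m) :=
  multipliable_one_sub_q_pow <|
    tendsto_atTop_mono (fun m => le_add_left (Nat.le_mul_of_pos_left m hk)) tendsto_id

theorem constantCoeff_qPochhammer {a k : ℕ} (ha : 0 < a) (hk : 0 < k) :
    constantCoeff (qPochhammer a k) = 1 := by
  rw [qPochhammer, (multipliable_qPochhammer a hk).map_tprod _ continuous_constantCoeff_rat]
  simp [q, ha.ne']

theorem tprod_one_sub_q_pow_mul_succ (k : ℕ) :
    ∏' i : ℕ, (1 - q ^ (k * (i + 1))) = qPochhammer k k := by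
  simp only [qPochhammer, mul_add_one, add_comm]

theorem tprod_one_sub_q_pow_succ_eq_prod_qPochhammer (r : ℕ) [NeZero r] :
    ∏' i : ℕ, (1 - q ^ (i + 1)) = ∏ k : Fin r, qPochhammer (k + 1) r := by
  let e : Fin r × ℕ ≃ ℕ := (Equiv.prodComm _ _).trans (Nat.divModEquiv r).symm
  have he : ∀ p, e p + 1 = (p.1 + 1) + r * p.2 := fun p => by
    simp only [e, Equiv.trans_apply, Equiv.prodComm_apply, Nat.divModEquiv_symm_apply,
      Prod.fst_swap, Prod.snd_swap]
    ring
  have hr : 0 < r := Nat.pos_of_neZero r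
  rw [← e.tprod_eq, Multipliable.tprod_prod', tprod_fintype]
  · simp only [he, qPochhammer]
  · exact e.multipliable_iff.2 (multipliable_one_sub_q_pow (tendsto_add_atTop_nat 1))
  · intro k
    simpa only [he] using multipliable_qPochhammer (k + 1) hr

theorem prod_filter_lt_mul_swap_mul_prod_diag {α M : Type*} [LinearOrder α] [Fintype α]
    [CommMonoid M] (f : α → α → M) :
    (∏ p ∈ univ.filter (fun p : α × α => p.1 < p.2), f p.1 p.2 * f p.2 p.1) * ∏ i, f i i =
      ∏ i, ∏ j, f i j := by
  have hswap : ∏ p ∈ univ.filter (fun p : α × α => p.1 < p.2), f p.2 p.1 =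
      ∏ p ∈ univ.filter (fun p : α × α => p.2 < p.1), f p.1 p.2 :=
    prod_nbij' Prod.swap Prod.swap (by simp) (by simp) (by simp) (by simp) (by simp)
  have hdiag : ∏ i, f i i = ∏ p ∈ univ.filter (fun p : α × α => p.1 = p.2), f p.1 p.2 :=
    prod_nbij' (fun i => (i, i)) Prod.fst (by simp) (by simp) (by simp) (by simp) (by simp)
  rw [prod_mul_distrib, hswap, hdiag, ← Fintype.prod_prod_type', prod_filter, prod_filter,
    prod_filter, ← prod_mul_distrib, ← prod_mul_distrib]
  refine prod_congr rfl fun p _ => ?_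
  rcases lt_trichotomy p.1 p.2 with h | h | h
  · simp [h, h.ne, h.not_gt]
  · simp [h]
  · simp [h, h.ne', h.not_gt]

theorem prod_prod_sub_eq_pow {G M : Type*} [AddGroup G] [Fintype G] [CommMonoid M] (g : G → M) :
    ∏ i, ∏ j, g (j - i) = (∏ d, g d) ^ Fintype.card G := by
  calc ∏ i, ∏ j, g (j - i) = ∏ _i : G, ∏ d, g d :=
        prod_congr rfl fun i _ => Fintype.prod_equiv (Equiv.subRight i) _ _ fun _ => rfl
    _ = (∏ d, g d) ^ Fintype.card G := by rw [prod_const, card_univ]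

theorem Fin.prod_filter_lt_mul_pow {M : Type*} [CommMonoid M] {n : ℕ} (H : Fin (n + 1) → M) :
    (∏ p ∈ univ.filter (fun p : Fin (n + 1) × Fin (n + 1) => p.1 < p.2),
      H (p.2 - p.1 - 1) * H (p.1 - p.2 - 1)) * H (-1) ^ (n + 1) = (∏ d, H d) ^ (n + 1) := by
  have h := prod_filter_lt_mul_swap_mul_prod_diag fun i j : Fin (n + 1) => H (j - i - 1)
  simp only [sub_self, zero_sub, prod_const] at h
  rw [h, prod_prod_sub_eq_pow (fun d => H (d - 1)), Fintype.card_fin,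
    Fintype.prod_equiv (Equiv.subRight 1) (fun d => H (d - 1)) H fun _ => rfl]

theorem Fin.val_sub_sub_one_add_one_of_gt {n : ℕ} {a b : Fin (n + 1)} (h : b < a) :
    (a - b - 1).val + 1 = a.val - b.val := by
  rw [Fin.coe_sub_one, if_neg (sub_ne_zero.2 h.ne'), Fin.coe_sub_iff_le.2 h.le]
  rw [Fin.lt_def] at h
  omega

theorem Fin.val_sub_sub_one_add_one_of_lt {n : ℕ} {a b : Fin (n + 1)} (h : a < b) :
    (a - b - 1).val + 1 = n + 1 - (b.val - a.val) := by
  rw [Fin.coe_sub_one, if_neg (sub_ne_zero.2 h.ne), Fin.coe_sub_iff_lt.2 h]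
  have := b.isLt
  rw [Fin.lt_def] at h
  omega

theorem principal_specialization_denominator (r : ℕ) (hr : 1 ≤ r) :
    (∏' i : ℕ, (1 - q ^ (r * (i + 1)))) ^ (r - 1) *
      ∏ p ∈ Finset.univ.filter (fun p : Fin r × Fin r => p.1 < p.2),
        ((∏' m : ℕ, (1 - q ^ ((p.2.val - p.1.val) + r * m))) *
         (∏' m : ℕ, (1 - q ^ ((r - (p.2.val - p.1.val)) + r * m)))) =
    (∏' i : ℕ, (1 - q ^ (i + 1))) ^ r * (∏' i : ℕ, (1 - q ^ (r * (i + 1))))⁻¹ := by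
  obtain ⟨n, rfl⟩ : ∃ n, r = n + 1 := ⟨r - 1, by omega⟩
  -- Shifting by one makes `H (j - i - 1) = (q^(j-i); q^r)_∞` and `H (-1) = (q^r; q^r)_∞`.
  let H : Fin (n + 1) → PowerSeries ℚ := fun d => qPochhammer (d.val + 1) (n + 1)
  have hpairs : ∏ p ∈ univ.filter (fun p : Fin (n + 1) × Fin (n + 1) => p.1 < p.2),
      ((∏' m : ℕ, (1 - q ^ ((p.2.val - p.1.val) + (n + 1) * m))) *
        (∏' m : ℕ, (1 - q ^ ((n + 1 - (p.2.val - p.1.val)) + (n + 1) * m)))) =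
      ∏ p ∈ univ.filter (fun p : Fin (n + 1) × Fin (n + 1) => p.1 < p.2),
        H (p.2 - p.1 - 1) * H (p.1 - p.2 - 1) :=
    prod_congr rfl fun p hp => by
      rw [mem_filter] at hp
      simp only [H, Fin.val_sub_sub_one_add_one_of_gt hp.2,
        Fin.val_sub_sub_one_add_one_of_lt hp.2]
      rfl
  have hH : H (-1) = qPochhammer (n + 1) (n + 1) := by simp only [H, Fin.coe_neg_one]
  have hunit : qPochhammer (n + 1) (n + 1) * (qPochhammer (n + 1) (n + 1))⁻¹ = 1 :=
    PowerSeries.mul_inv_cancel _ (by simp [constantCoeff_qPochhammer])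
  rw [tprod_one_sub_q_pow_mul_succ, hpairs, tprod_one_sub_q_pow_succ_eq_prod_qPochhammer (n + 1),
    ← Fin.prod_filter_lt_mul_pow H, hH, Nat.add_sub_cancel, pow_succ,
    mul_assoc, mul_assoc, hunit, mul_one, mul_comm]
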